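/- arXiv:1901.09401 — 2 statements merged into one kernel-verified Lean document; each statement's English description precedes it below -/
import Mathlib

section
/- Let S be an independent sampling on {1, …, n}: for given probabilities 0 < p_i ≤ 1, p_C = Π_{i∈C} p_i · Π_{i∉C} (1 − p_i) for every subset C ⊆ {1, …, n}. Assume each f_i : ℝ^d → ℝ is convex and M_i-smooth, and let x* satisfy ∇f(x*) = 0. Then (f, D) with D the law of v(S) satisfies expected smoothness with constant L + max_{i∈[n]} ((1 − p_i)/p_i) · λmax(M_i)/n, where L = (1/n) λmax(Σ_{i=1}^n M_i): that is, for all x ∈ ℝ^d, Σ_C p_C ‖∇f_{v(C)}(x) − ∇f_{v(C)}(x*)‖² ≤ 2 (L + max_i ((1 − p_i)/p_i) λmax(M_i)/n) (f(x) − f(x*)). -/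
open RealInnerProductSpace

/-- The largest eigenvalue of a (symmetric) real matrix, characterized as the supremum of the
Rayleigh quotient `⟨Ax, x⟩` over the unit sphere. -/
noncomputable def lamMax {d : ℕ} (A : Matrix (Fin d) (Fin d) ℝ) : ℝ :=
  sSup {r : ℝ | ∃ x : EuclideanSpace ℝ (Fin d), ‖x‖ = 1 ∧ r = ∑ j, ∑ k, A j k * x k * x j}

section Aux

variable {d : ℕ}

lemma ES.inner_grad (g : EuclideanSpace ℝ (Fin d) → ℝ) (x h : EuclideanSpace ℝ (Fin d)) :
    ⟪gradient g x, h⟫ = fderiv ℝ g x h := by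
  rw [gradient]; exact InnerProductSpace.toDual_symm_apply

lemma ES.convex_grad_ineq (g : EuclideanSpace ℝ (Fin d) → ℝ) (hg : Differentiable ℝ g)
    (hc : ConvexOn ℝ Set.univ g) (y z : EuclideanSpace ℝ (Fin d)) :
    g y + ⟪gradient g y, z - y⟫ ≤ g z := by
  have hφc : ConvexOn ℝ Set.univ
      (g ∘ (AffineMap.lineMap y z : ℝ →ᵃ[ℝ] EuclideanSpace ℝ (Fin d))) := by
    have := hc.comp_affineMap (AffineMap.lineMap y z : ℝ →ᵃ[ℝ] EuclideanSpace ℝ (Fin d))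
    simpa using this
  have hd : HasDerivAt (g ∘ (AffineMap.lineMap y z : ℝ →ᵃ[ℝ] EuclideanSpace ℝ (Fin d)))
      (fderiv ℝ g y (z - y)) 0 := by
    have h1 : HasFDerivAt g (fderiv ℝ g y)
        ((AffineMap.lineMap y z : ℝ →ᵃ[ℝ] EuclideanSpace ℝ (Fin d)) (0:ℝ)) := by
      simpa using (hg ((AffineMap.lineMap y z : ℝ →ᵃ[ℝ] EuclideanSpace ℝ (Fin d)) (0:ℝ))).hasFDerivAt
    exact h1.comp_hasDerivAt 0 AffineMap.hasDerivAt_lineMap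
  have := hφc.le_slope_of_hasDerivAt (Set.mem_univ (0:ℝ)) (Set.mem_univ (1:ℝ)) one_pos hd
  rw [slope_def_field] at this
  simp only [Function.comp, AffineMap.lineMap_apply_zero, AffineMap.lineMap_apply_one] at this
  rw [ES.inner_grad]
  linarith

lemma ES.coord_abs_le (x : EuclideanSpace ℝ (Fin d)) (k : Fin d) : |x k| ≤ ‖x‖ := by
  have h1 : (x k)^2 ≤ ∑ i, (x i)^2 :=
    Finset.single_le_sum (fun i _ => sq_nonneg (x i)) (Finset.mem_univ k)
  have h2 : ‖x‖^2 = ∑ i, (x i)^2 := by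
    rw [EuclideanSpace.norm_eq]
    rw [Real.sq_sqrt (Finset.sum_nonneg fun i _ => sq_nonneg _)]
    simp [sq_abs]
  have := h1.trans_eq h2.symm
  calc |x k| = Real.sqrt ((x k)^2) := (Real.sqrt_sq_eq_abs _).symm
    _ ≤ Real.sqrt (‖x‖^2) := Real.sqrt_le_sqrt this
    _ = ‖x‖ := by rw [Real.sqrt_sq (norm_nonneg _)]

lemma ES.lamMax_bddAbove (A : Matrix (Fin d) (Fin d) ℝ) :
    BddAbove {r : ℝ | ∃ x : EuclideanSpace ℝ (Fin d), ‖x‖ = 1 ∧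
      r = ∑ j, ∑ k, A j k * x k * x j} := by
  refine ⟨∑ j, ∑ k, |A j k|, ?_⟩
  rintro r ⟨x, hx, rfl⟩
  refine Finset.sum_le_sum fun j _ => Finset.sum_le_sum fun k _ => ?_
  calc A j k * x k * x j ≤ |A j k * x k * x j| := le_abs_self _
    _ = |A j k| * |x k| * |x j| := by rw [abs_mul, abs_mul]
    _ ≤ |A j k| * 1 * 1 := by
        have hk := (ES.coord_abs_le x k).trans_eq hx
        have hj := (ES.coord_abs_le x j).trans_eq hx
        have h0 : (0:ℝ) ≤ |A j k| * |x k| := mul_nonneg (abs_nonneg _) (abs_nonneg _)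
        nlinarith [abs_nonneg (A j k), abs_nonneg (x k), abs_nonneg (x j)]
    _ = |A j k| := by ring

lemma ES.quad_le_lamMax (A : Matrix (Fin d) (Fin d) ℝ) (h : EuclideanSpace ℝ (Fin d)) :
    ∑ j, ∑ k, A j k * h k * h j ≤ lamMax A * ‖h‖^2 := by
  rcases eq_or_ne h 0 with rfl | hne
  · simp
  · have hn : (0:ℝ) < ‖h‖ := norm_pos_iff.mpr hne
    set e : EuclideanSpace ℝ (Fin d) := ‖h‖⁻¹ • h with he
    have hue : ‖e‖ = 1 := by
      rw [he, norm_smul]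
      simp [hn.ne', abs_of_pos (inv_pos.mpr hn)]
    have hle : (∑ j, ∑ k, A j k * e k * e j) ≤ lamMax A :=
      le_csSup (ES.lamMax_bddAbove A) ⟨e, hue, rfl⟩
    have hQe : ∑ j, ∑ k, A j k * e k * e j = ‖h‖⁻¹^2 * ∑ j, ∑ k, A j k * h k * h j := by
      rw [Finset.mul_sum]
      refine Finset.sum_congr rfl fun j _ => ?_
      rw [Finset.mul_sum]
      refine Finset.sum_congr rfl fun k _ => ?_
      show A j k * e k * e j = _
      simp only [he, PiLp.smul_apply, smul_eq_mul]
      ring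
    rw [hQe] at hle
    have h2 : ‖h‖⁻¹^2 * (∑ j, ∑ k, A j k * h k * h j) * ‖h‖^2 ≤ lamMax A * ‖h‖^2 :=
      mul_le_mul_of_nonneg_right hle (sq_nonneg _)
    calc ∑ j, ∑ k, A j k * h k * h j
        = ‖h‖⁻¹^2 * (∑ j, ∑ k, A j k * h k * h j) * ‖h‖^2 := by field_simp
    _ ≤ lamMax A * ‖h‖^2 := h2

lemma ES.lamMax_pos (hd : 0 < d) (A : Matrix (Fin d) (Fin d) ℝ)
    (hA : 0 < A ⟨0, hd⟩ ⟨0, hd⟩) : 0 < lamMax A := by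
  set j0 : Fin d := ⟨0, hd⟩
  set x : EuclideanSpace ℝ (Fin d) := EuclideanSpace.single j0 (1:ℝ) with hx
  have hxn : ‖x‖ = 1 := by simp [hx, EuclideanSpace.norm_single]
  have hq : ∑ j, ∑ k, A j k * x k * x j = A j0 j0 := by
    have hxa : ∀ k, x k = if k = j0 then 1 else 0 := by
      intro k; simp [hx, EuclideanSpace.single_apply]
    simp only [hxa]
    rw [Finset.sum_eq_single j0]
    · rw [Finset.sum_eq_single j0] <;> simp +contextual
    · intro b _ hb; simp [hb]
    · simp
  have : A j0 j0 ≤ lamMax A := le_csSup (ES.lamMax_bddAbove A) ⟨x, hxn, hq.symm⟩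
  linarith

lemma ES.posdef_diag (A : Matrix (Fin d) (Fin d) ℝ) (hA : A.PosDef) (j : Fin d) :
    0 < A j j := by
  have h := hA.dotProduct_mulVec_pos (x := Pi.single j 1) (by
    intro h
    have := congrFun h j
    simp at this)
  simpa [dotProduct, Matrix.mulVec, Pi.single_apply, Finset.sum_ite_eq,
    Finset.sum_ite_eq'] using h

lemma ES.cocoercive (g : EuclideanSpace ℝ (Fin d) → ℝ)
    (hc : ∀ y z : EuclideanSpace ℝ (Fin d), g y + ⟪gradient g y, z - y⟫ ≤ g z)
    {ℓ : ℝ} (hℓ : 0 < ℓ)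
    (hs : ∀ x h : EuclideanSpace ℝ (Fin d), g (x + h) ≤ g x + ⟪gradient g x, h⟫ + ℓ/2 * ‖h‖^2)
    (x y : EuclideanSpace ℝ (Fin d)) :
    ‖gradient g x - gradient g y‖^2 ≤ 2 * ℓ * (g x - g y - ⟪gradient g y, x - y⟫) := by
  set u : EuclideanSpace ℝ (Fin d) := gradient g x - gradient g y with hu
  set h : EuclideanSpace ℝ (Fin d) := -(ℓ⁻¹ • u) with hh
  have h1 := hs x h
  have h2 := hc y (x + h)
  have e1 : ⟪gradient g y, x + h - y⟫ = ⟪gradient g y, x - y⟫ + ⟪gradient g y, h⟫ := by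
    rw [← inner_add_right]; congr 1; abel
  have e2 : ⟪gradient g x, h⟫ - ⟪gradient g y, h⟫ = ⟪u, h⟫ := by
    rw [hu, inner_sub_left]
  have e3 : ⟪u, h⟫ = -(ℓ⁻¹ * ‖u‖^2) := by
    rw [hh, inner_neg_right, real_inner_smul_right, real_inner_self_eq_norm_sq]
  have e4 : ‖h‖^2 = ℓ⁻¹^2 * ‖u‖^2 := by
    rw [hh, norm_neg, norm_smul]
    simp [abs_of_pos (inv_pos.mpr hℓ), mul_pow]
  rw [e1] at h2
  have key : ⟪gradient g y, h⟫ - ⟪gradient g x, h⟫ - ℓ/2 * ‖h‖^2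
      ≤ g x - g y - ⟪gradient g y, x - y⟫ := by linarith
  have lhs_eq : ⟪gradient g y, h⟫ - ⟪gradient g x, h⟫ - ℓ/2 * ‖h‖^2
      = ℓ⁻¹ * ‖u‖^2 - ℓ/2 * (ℓ⁻¹^2 * ‖u‖^2) := by
    have : ⟪gradient g y, h⟫ - ⟪gradient g x, h⟫ = -⟪u, h⟫ := by rw [← e2]; ring
    rw [this, e3, e4]; ring
  rw [lhs_eq] at key
  have hfe : ℓ⁻¹ * ‖u‖^2 - ℓ/2 * (ℓ⁻¹^2 * ‖u‖^2) = ‖u‖^2 / (2*ℓ) := by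
    field_simp; ring
  rw [hfe] at key
  calc ‖u‖^2 = (2*ℓ) * (‖u‖^2 / (2*ℓ)) := by field_simp
    _ ≤ 2 * ℓ * (g x - g y - ⟪gradient g y, x - y⟫) :=
        mul_le_mul_of_nonneg_left key (by positivity)

lemma ES.gradient_avg_sum {n : ℕ} (f : Fin n → EuclideanSpace ℝ (Fin d) → ℝ)
    (hdiff : ∀ i, Differentiable ℝ (f i)) (x : EuclideanSpace ℝ (Fin d)) :
    HasGradientAt (fun y => (1/(n:ℝ)) * ∑ i, f i y) ((n:ℝ)⁻¹ • ∑ i, gradient (f i) x) x := by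
  rw [hasGradientAt_iff_hasFDerivAt]
  have hf : HasFDerivAt (fun y => (1/(n:ℝ)) * ∑ i, f i y)
      ((1/(n:ℝ)) • ∑ i, fderiv ℝ (f i) x) x := by
    have hsum : HasFDerivAt (fun y => ∑ i, f i y) (∑ i, fderiv ℝ (f i) x) x :=
      HasFDerivAt.fun_sum fun i _ => (hdiff i x).hasFDerivAt
    simpa [smul_eq_mul] using hsum.const_mul (1/(n:ℝ))
  refine hf.congr_fderiv ?_
  have hg : ∀ i, (InnerProductSpace.toDual ℝ (EuclideanSpace ℝ (Fin d))) (gradient (f i) x)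
      = fderiv ℝ (f i) x := by
    intro i
    rw [gradient]
    exact (InnerProductSpace.toDual ℝ _).apply_symm_apply _
  rw [map_smul, map_sum]
  simp only [hg]
  norm_num

lemma ES.sum_p_superset {n : ℕ} (pr : Fin n → ℝ) (p : Finset (Fin n) → ℝ)
    (hp : ∀ C : Finset (Fin n), p C = (∏ i ∈ C, pr i) * ∏ i ∈ Cᶜ, (1 - pr i))
    (s : Finset (Fin n)) :
    ∑ C ∈ Finset.univ.filter (fun C => s ⊆ C), p C = ∏ i ∈ s, pr i := by
  classical
  have hsum1 : ∀ i, pr i + (1 - pr i) = 1 := fun i => by ring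
  have step : ∑ C ∈ Finset.univ.filter (fun C => s ⊆ C), p C
      = ∑ D ∈ sᶜ.powerset, p (D ∪ s) := by
    refine Finset.sum_nbij' (fun C => C \ s) (fun D => D ∪ s) ?_ ?_ ?_ ?_ ?_
    · intro C hC
      simp only [Finset.mem_filter] at hC
      rw [Finset.mem_powerset]
      intro a ha
      rw [Finset.mem_sdiff] at ha
      simp [ha.2]
    · intro D hD
      simp [Finset.mem_filter]
    · intro C hC
      simp only [Finset.mem_filter] at hC
      exact Finset.sdiff_union_of_subset hC.2
    · intro D hD
      rw [Finset.mem_powerset] at hD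
      show (D ∪ s) \ s = D
      rw [Finset.union_sdiff_right]
      exact Finset.sdiff_eq_self_of_disjoint
        (Finset.disjoint_left.mpr fun a haD has => by
          have := hD haD; simp at this; exact this has)
    · intro C hC
      simp only [Finset.mem_filter] at hC
      rw [Finset.sdiff_union_of_subset hC.2]
  rw [step]
  have key : ∀ D ∈ sᶜ.powerset, p (D ∪ s)
      = (∏ i ∈ s, pr i) * ((∏ i ∈ D, pr i) * ∏ i ∈ sᶜ \ D, (1 - pr i)) := by
    intro D hD
    rw [Finset.mem_powerset] at hD
    have hdisj : Disjoint D s := by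
      rw [Finset.disjoint_left]
      intro a haD has
      have := hD haD; simp at this; exact this has
    have hcompl : (D ∪ s)ᶜ = sᶜ \ D := by
      rw [Finset.compl_union, Finset.inter_comm, ← Finset.sdiff_eq_inter_compl]
    rw [hp, Finset.prod_union hdisj, hcompl]
    ring
  rw [Finset.sum_congr rfl key, ← Finset.mul_sum]
  have : ∑ D ∈ sᶜ.powerset, (∏ i ∈ D, pr i) * ∏ i ∈ sᶜ \ D, (1 - pr i) = 1 := by
    rw [← Finset.prod_add]
    rw [Finset.prod_congr rfl (fun i _ => hsum1 i)]
    simp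
  rw [this, mul_one]

lemma ES.second_moment {n : ℕ} (pr : Fin n → ℝ) (p : Finset (Fin n) → ℝ)
    (hp : ∀ C : Finset (Fin n), p C = (∏ i ∈ C, pr i) * ∏ i ∈ Cᶜ, (1 - pr i))
    (u : Fin n → EuclideanSpace ℝ (Fin d)) :
    ∑ C : Finset (Fin n), p C * ‖∑ i ∈ C, u i‖^2
      = ‖∑ i, pr i • u i‖^2 + ∑ i, (pr i * (1 - pr i)) * ‖u i‖^2 := by
  classical
  have ha : ∀ C : Finset (Fin n), ‖∑ i ∈ C, u i‖^2
      = ∑ i, ∑ j, ((if i ∈ C then (1:ℝ) else 0) * (if j ∈ C then (1:ℝ) else 0)) * ⟪u i, u j⟫ := by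
    intro C
    rw [← real_inner_self_eq_norm_sq, sum_inner]
    have : ∀ i, ⟪u i, ∑ j ∈ C, u j⟫
        = ∑ j, (if j ∈ C then (1:ℝ) else 0) * ⟪u i, u j⟫ := by
      intro i
      rw [inner_sum]
      symm
      simp only [ite_mul, one_mul, zero_mul]
      rw [Finset.sum_ite_mem, Finset.univ_inter]
    calc ∑ i ∈ C, ⟪u i, ∑ j ∈ C, u j⟫
        = ∑ i, (if i ∈ C then (1:ℝ) else 0) * ⟪u i, ∑ j ∈ C, u j⟫ := by
          symm
          simp only [ite_mul, one_mul, zero_mul]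
          rw [Finset.sum_ite_mem, Finset.univ_inter]
      _ = ∑ i, ∑ j, ((if i ∈ C then (1:ℝ) else 0) * (if j ∈ C then (1:ℝ) else 0)) * ⟪u i, u j⟫ := by
          refine Finset.sum_congr rfl fun i _ => ?_
          rw [this i, Finset.mul_sum]
          refine Finset.sum_congr rfl fun j _ => ?_
          ring
  have hc : ∀ i j : Fin n,
      ∑ C : Finset (Fin n), p C * ((if i ∈ C then (1:ℝ) else 0) * (if j ∈ C then (1:ℝ) else 0))
        = ∏ k ∈ ({i, j} : Finset (Fin n)), pr k := by
    intro i j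
    rw [← ES.sum_p_superset pr p hp ({i,j} : Finset (Fin n))]
    rw [Finset.sum_filter]
    refine Finset.sum_congr rfl fun C _ => ?_
    by_cases hi : i ∈ C <;> by_cases hj : j ∈ C <;>
      simp [hi, hj, Finset.insert_subset_iff]
  have hb : ∑ C : Finset (Fin n), p C * ‖∑ i ∈ C, u i‖^2
      = ∑ i, ∑ j, (∏ k ∈ ({i, j} : Finset (Fin n)), pr k) * ⟪u i, u j⟫ := by
    calc ∑ C : Finset (Fin n), p C * ‖∑ i ∈ C, u i‖^2
        = ∑ C : Finset (Fin n), ∑ i, ∑ j,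
          p C * ((if i ∈ C then (1:ℝ) else 0) * (if j ∈ C then (1:ℝ) else 0)) * ⟪u i, u j⟫ := by
          refine Finset.sum_congr rfl fun C _ => ?_
          rw [ha C, Finset.mul_sum]
          refine Finset.sum_congr rfl fun i _ => ?_
          rw [Finset.mul_sum]
          refine Finset.sum_congr rfl fun j _ => ?_
          ring
      _ = ∑ i, ∑ j, ∑ C : Finset (Fin n),
          p C * ((if i ∈ C then (1:ℝ) else 0) * (if j ∈ C then (1:ℝ) else 0)) * ⟪u i, u j⟫ := by
          rw [Finset.sum_comm]
          refine Finset.sum_congr rfl fun i _ => ?_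
          rw [Finset.sum_comm]
      _ = ∑ i, ∑ j, (∏ k ∈ ({i, j} : Finset (Fin n)), pr k) * ⟪u i, u j⟫ := by
          refine Finset.sum_congr rfl fun i _ => Finset.sum_congr rfl fun j _ => ?_
          rw [← Finset.sum_mul, hc i j]
  rw [hb]
  have hd : ∀ i j : Fin n, (∏ k ∈ ({i, j} : Finset (Fin n)), pr k) * ⟪u i, u j⟫
      = pr i * pr j * ⟪u i, u j⟫ + (if j = i then (pr i - pr i^2) * ⟪u i, u i⟫ else 0) := by
    intro i j
    by_cases hij : j = i
    · rw [hij]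
      have hjj : ({i, i} : Finset (Fin n)) = {i} := by simp
      rw [if_pos rfl, hjj, Finset.prod_singleton]
      ring
    · rw [Finset.prod_pair (fun h => hij h.symm), if_neg hij]
      ring
  calc ∑ i, ∑ j, (∏ k ∈ ({i, j} : Finset (Fin n)), pr k) * ⟪u i, u j⟫
      = ∑ i, ((∑ j, pr i * pr j * ⟪u i, u j⟫) + (pr i - pr i^2) * ⟪u i, u i⟫) := by
        refine Finset.sum_congr rfl fun i _ => ?_
        rw [Finset.sum_congr rfl fun j _ => hd i j, Finset.sum_add_distrib,
          Finset.sum_ite_eq' Finset.univ i]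
        simp
    _ = ‖∑ i, pr i • u i‖^2 + ∑ i, (pr i * (1 - pr i)) * ‖u i‖^2 := by
        rw [Finset.sum_add_distrib]
        congr 1
        · rw [← real_inner_self_eq_norm_sq, sum_inner]
          refine Finset.sum_congr rfl fun i _ => ?_
          rw [real_inner_smul_left, inner_sum, Finset.mul_sum]
          refine Finset.sum_congr rfl fun j _ => ?_
          rw [real_inner_smul_right]
          ring
        · refine Finset.sum_congr rfl fun i _ => ?_
          rw [real_inner_self_eq_norm_sq]
          ring

end Aux


lemma ES.convexOn_finset_sum {d : ℕ} {ι : Type*} (t : Finset ι)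
    (f : ι → EuclideanSpace ℝ (Fin d) → ℝ) (h : ∀ i ∈ t, ConvexOn ℝ Set.univ (f i)) :
    ConvexOn ℝ Set.univ (fun y => ∑ i ∈ t, f i y) := by
  classical
  induction t using Finset.cons_induction with
  | empty => simpa using convexOn_const (0:ℝ) convex_univ
  | cons a t ha ih =>
    simp only [Finset.sum_cons]
    exact (h a (Finset.mem_cons_self a t)).add (ih fun i hi => h i (Finset.mem_cons_of_mem hi))

/-- **Proposition 2(iii) (independent sampling).** Let `S` be an independent sampling with
inclusion probabilities `0 < pr_i ≤ 1` (so `p_C = Π_{i∈C} pr_i Π_{i∉C} (1 − pr_i)`). If each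
`f_i` is convex and `M_i`-smooth and `∇f(x*) = 0`, then expected smoothness holds with constant
`L + max_i ((1 − pr_i)/pr_i) λmax(M_i)/n`, where `L = (1/n) λmax(Σ_i M_i)`: for all `x`,
`Σ_C p_C ‖∇f_{v(C)}(x) − ∇f_{v(C)}(x*)‖² ≤ 2 (L + max_i ((1−pr_i)/pr_i) λmax(M_i)/n)(f(x)−f(x*))`. -/
theorem expected_smoothness_independent_sampling
    {d n : ℕ} (hn : 0 < n)
    (pr : Fin n → ℝ)
    (hpr0 : ∀ i, 0 < pr i) (hpr1 : ∀ i, pr i ≤ 1)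
    (p : Finset (Fin n) → ℝ)
    (hp : ∀ C : Finset (Fin n), p C = (∏ i ∈ C, pr i) * ∏ i ∈ Cᶜ, (1 - pr i))
    (q : Fin n → ℝ)
    (hq : ∀ i, q i = ∑ C ∈ Finset.univ.filter (fun C : Finset (Fin n) => i ∈ C), p C)
    (f : Fin n → EuclideanSpace ℝ (Fin d) → ℝ)
    (hdiff : ∀ i, Differentiable ℝ (f i))
    (hconv : ∀ i, ConvexOn ℝ Set.univ (f i))
    (M : Fin n → Matrix (Fin d) (Fin d) ℝ)
    (hMpd : ∀ i, (M i).PosDef)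
    (hsmooth : ∀ i (x h : EuclideanSpace ℝ (Fin d)),
      f i (x + h) ≤ f i x + ⟪gradient (f i) x, h⟫ + (1 / 2) * ∑ j, ∑ k, M i j k * h k * h j)
    (F : EuclideanSpace ℝ (Fin d) → ℝ)
    (hF : ∀ x, F x = (1 / (n : ℝ)) * ∑ i, f i x)
    (xstar : EuclideanSpace ℝ (Fin d))
    (hcrit : gradient F xstar = 0)
    (gC : Finset (Fin n) → EuclideanSpace ℝ (Fin d) → EuclideanSpace ℝ (Fin d))
    (hgC : ∀ C x, gC C x = ((n : ℝ)⁻¹) • ∑ i ∈ C, (q i)⁻¹ • gradient (f i) x)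
    (L : ℝ) (hL : L = (1 / (n : ℝ)) * lamMax (∑ i, M i)) :
    ∀ x, ∑ C : Finset (Fin n), p C * ‖gC C x - gC C xstar‖ ^ 2
        ≤ 2 * (L + ⨆ i : Fin n, ((1 - pr i) / pr i) * lamMax (M i) / (n : ℝ))
            * (F x - F xstar) := by
  classical
  intro x
  have hn' : ((n:ℝ)) ≠ 0 := Nat.cast_ne_zero.mpr hn.ne'
  have hnpos : (0:ℝ) < (n:ℝ) := Nat.cast_pos.mpr hn
  have hq_eq : ∀ i, q i = pr i := by
    intro i
    rw [hq i]
    have hfe : Finset.univ.filter (fun C : Finset (Fin n) => i ∈ C)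
        = Finset.univ.filter (fun C : Finset (Fin n) => ({i} : Finset (Fin n)) ⊆ C) := by
      apply Finset.filter_congr
      intro C _
      simp
    rw [hfe, ES.sum_p_superset pr p hp, Finset.prod_singleton]
  rcases Nat.eq_zero_or_pos d with hd0 | hd
  · subst hd0
    have hxx : x = xstar := by ext i; exact i.elim0
    simp [hxx]
  -- main case
  set K : ℝ := ⨆ i : Fin n, ((1 - pr i) / pr i) * lamMax (M i) / (n : ℝ) with hK
  have hKle : ∀ i, ((1 - pr i) / pr i) * lamMax (M i) / (n:ℝ) ≤ K := by
    intro i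
    rw [hK]
    exact le_ciSup (f := fun i => ((1 - pr i) / pr i) * lamMax (M i) / (n:ℝ))
      (Set.Finite.bddAbove (Set.finite_range _)) i
  set u : Fin n → EuclideanSpace ℝ (Fin d) :=
    fun i => ((n:ℝ)⁻¹ * (pr i)⁻¹) • (gradient (f i) x - gradient (f i) xstar) with hu
  set Dq : Fin n → ℝ :=
    fun i => f i x - f i xstar - ⟪gradient (f i) xstar, x - xstar⟫ with hDq
  have hFfun : F = fun y => (1/(n:ℝ)) * ∑ i, f i y := funext hF
  have hgradF : ∀ y, gradient F y = (n:ℝ)⁻¹ • ∑ i, gradient (f i) y := by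
    intro y
    rw [hFfun]
    exact (ES.gradient_avg_sum f hdiff y).gradient
  have hFdiff : Differentiable ℝ F := by
    rw [hFfun]
    exact Differentiable.const_mul (Differentiable.fun_sum fun i _ => hdiff i) _
  have hFconv : ConvexOn ℝ Set.univ F := by
    rw [hFfun]
    have hs := (ES.convexOn_finset_sum Finset.univ f (fun i _ => hconv i)).smul
      (c := 1/(n:ℝ)) (by positivity)
    simpa [smul_eq_mul] using hs
  have hsumgrad0 : ∑ i, gradient (f i) xstar = 0 := by
    have h0 := hcrit
    rw [hgradF xstar] at h0
    rcases smul_eq_zero.mp h0 with h | h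
    · exact absurd h (inv_ne_zero hn')
    · exact h
  have hci : ∀ i (y z : EuclideanSpace ℝ (Fin d)),
      f i y + ⟪gradient (f i) y, z - y⟫ ≤ f i z :=
    fun i => ES.convex_grad_ineq (f i) (hdiff i) (hconv i)
  have hDnn : ∀ i, 0 ≤ Dq i := fun i => by
    have := hci i xstar x
    simp only [hDq]
    linarith
  have hlampos : ∀ i, 0 < lamMax (M i) := fun i =>
    ES.lamMax_pos hd (M i) (ES.posdef_diag (M i) (hMpd i) ⟨0, hd⟩)
  have hsm' : ∀ i (y h : EuclideanSpace ℝ (Fin d)),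
      f i (y + h) ≤ f i y + ⟪gradient (f i) y, h⟫ + (lamMax (M i))/2 * ‖h‖^2 := by
    intro i y h
    have h1 := hsmooth i y h
    have h2 := ES.quad_le_lamMax (M i) h
    linarith
  have hacocoer : ∀ i, ‖gradient (f i) x - gradient (f i) xstar‖^2
      ≤ 2 * lamMax (M i) * Dq i := by
    intro i
    have := ES.cocoercive (f i) (hci i) (hlampos i) (hsm' i) x xstar
    simpa [hDq] using this
  -- L part
  have hlamsumpos : 0 < lamMax (∑ i, M i) := by
    apply ES.lamMax_pos hd
    have hdg : (∑ i, M i) ⟨0,hd⟩ ⟨0,hd⟩ = ∑ i, M i ⟨0,hd⟩ ⟨0,hd⟩ := by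
      simp [Matrix.sum_apply]
    rw [hdg]
    exact Finset.sum_pos (fun i _ => ES.posdef_diag (M i) (hMpd i) _)
      ⟨⟨0,hn⟩, Finset.mem_univ _⟩
  have hLpos : 0 < L := by
    rw [hL]
    positivity
  have hMapp : ∀ (j k : Fin d), (∑ i, M i) j k = ∑ i, M i j k := by
    intro j k; simp [Matrix.sum_apply]
  have hFsm : ∀ (y h : EuclideanSpace ℝ (Fin d)),
      F (y + h) ≤ F y + ⟪gradient F y, h⟫ + L/2 * ‖h‖^2 := by
    intro y h
    have hsumQ : ∑ i, (∑ j, ∑ k, M i j k * h k * h j)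
        = ∑ j, ∑ k, (∑ i, M i) j k * h k * h j := by
      rw [Finset.sum_comm]
      refine Finset.sum_congr rfl fun j _ => ?_
      rw [Finset.sum_comm]
      refine Finset.sum_congr rfl fun k _ => ?_
      rw [hMapp, Finset.sum_mul, Finset.sum_mul]
    have hip : ⟪gradient F y, h⟫ = (1/(n:ℝ)) * ∑ i, ⟪gradient (f i) y, h⟫ := by
      rw [hgradF y, real_inner_smul_left, sum_inner]
      norm_num
    have hbound : ∑ i, f i (y + h)
        ≤ ∑ i, (f i y + ⟪gradient (f i) y, h⟫ + (1/2) * ∑ j, ∑ k, M i j k * h k * h j) :=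
      Finset.sum_le_sum fun i _ => hsmooth i y h
    have hexp : ∑ i, (f i y + ⟪gradient (f i) y, h⟫ + (1/2) * ∑ j, ∑ k, M i j k * h k * h j)
        = (∑ i, f i y) + (∑ i, ⟪gradient (f i) y, h⟫)
          + (1/2) * ∑ i, (∑ j, ∑ k, M i j k * h k * h j) := by
      rw [Finset.sum_add_distrib, Finset.sum_add_distrib, ← Finset.mul_sum]
    have hquad : (1/(n:ℝ)) * ((1/2) * ∑ i, (∑ j, ∑ k, M i j k * h k * h j))
        ≤ L/2 * ‖h‖^2 := by
      rw [hsumQ, hL]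
      have := ES.quad_le_lamMax (∑ i, M i) h
      have hmul := mul_le_mul_of_nonneg_left this (le_of_lt (by positivity : (0:ℝ) < 1/(2*(n:ℝ))))
      calc (1/(n:ℝ)) * ((1/2) * ∑ j, ∑ k, (∑ i, M i) j k * h k * h j)
          = (1/(2*(n:ℝ))) * (∑ j, ∑ k, (∑ i, M i) j k * h k * h j) := by ring
        _ ≤ (1/(2*(n:ℝ))) * (lamMax (∑ i, M i) * ‖h‖^2) := hmul
        _ = 1 / (n:ℝ) * lamMax (∑ i, M i) / 2 * ‖h‖^2 := by ring
    have hstep : F (y + h) ≤ (1/(n:ℝ)) * ((∑ i, f i y) + (∑ i, ⟪gradient (f i) y, h⟫)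
          + (1/2) * ∑ i, (∑ j, ∑ k, M i j k * h k * h j)) := by
      rw [hF (y + h), ← hexp]
      exact mul_le_mul_of_nonneg_left hbound (by positivity)
    rw [hF y, hip]
    have hre : (1/(n:ℝ)) * ((∑ i, f i y) + (∑ i, ⟪gradient (f i) y, h⟫)
          + (1/2) * ∑ i, (∑ j, ∑ k, M i j k * h k * h j))
        = (1/(n:ℝ)) * (∑ i, f i y) + (1/(n:ℝ)) * (∑ i, ⟪gradient (f i) y, h⟫)
          + (1/(n:ℝ)) * ((1/2) * ∑ i, (∑ j, ∑ k, M i j k * h k * h j)) := by ring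
    rw [hre] at hstep
    linarith
  have hFco : ‖gradient F x - gradient F xstar‖^2 ≤ 2 * L * (F x - F xstar) := by
    have hco := ES.cocoercive F (ES.convex_grad_ineq F hFdiff hFconv) hLpos hFsm x xstar
    have h0 : ⟪gradient F xstar, x - xstar⟫ = 0 := by rw [hcrit, inner_zero_left]
    rw [h0, sub_zero] at hco
    exact hco
  -- LHS rewrite
  have hgCd : ∀ C : Finset (Fin n), gC C x - gC C xstar = ∑ i ∈ C, u i := by
    intro C
    rw [hgC C x, hgC C xstar, ← smul_sub, ← Finset.sum_sub_distrib, Finset.smul_sum]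
    refine Finset.sum_congr rfl fun i _ => ?_
    rw [hq_eq i, ← smul_sub, smul_smul, hu]
  have key := ES.second_moment pr p hp u
  have hterm1 : (∑ i, pr i • u i) = gradient F x - gradient F xstar := by
    rw [hgradF x, hgradF xstar, ← smul_sub, ← Finset.sum_sub_distrib, Finset.smul_sum]
    refine Finset.sum_congr rfl fun i _ => ?_
    rw [hu]
    simp only
    rw [smul_smul]
    congr 1
    have hpri : pr i ≠ 0 := (hpr0 i).ne'
    rw [mul_comm ((n:ℝ)⁻¹) ((pr i)⁻¹), ← mul_assoc, mul_inv_cancel₀ hpri, one_mul]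
  have hnorm : ∀ i, ‖u i‖^2 = ((n:ℝ)⁻¹ * (pr i)⁻¹)^2
      * ‖gradient (f i) x - gradient (f i) xstar‖^2 := by
    intro i
    rw [hu]
    simp only
    rw [norm_smul, Real.norm_eq_abs, mul_pow, sq_abs]
  have hsumfx : ∀ y, ∑ i, f i y = (n:ℝ) * F y := by
    intro y
    rw [hF y]
    field_simp
  have hsumD : ∑ i, Dq i = (n:ℝ) * (F x - F xstar) := by
    rw [hDq]
    simp only
    rw [Finset.sum_sub_distrib, Finset.sum_sub_distrib, hsumfx, hsumfx, ← sum_inner,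
      hsumgrad0, inner_zero_left]
    ring
  have hterm2 : ∑ i, (pr i * (1 - pr i)) * ‖u i‖^2 ≤ 2 * K * (F x - F xstar) := by
    have hper : ∀ i ∈ Finset.univ,
        (pr i * (1 - pr i)) * ‖u i‖^2 ≤ (2 * (n:ℝ)⁻¹ * Dq i) * K := by
      intro i _
      have hpri := hpr0 i
      have h1 : (pr i * (1 - pr i)) * ‖u i‖^2
          ≤ (pr i * (1 - pr i)) * (((n:ℝ)⁻¹ * (pr i)⁻¹)^2 * (2 * lamMax (M i) * Dq i)) := by
        rw [hnorm i]
        refine mul_le_mul_of_nonneg_left ?_ (mul_nonneg (hpr0 i).le (by linarith [hpr1 i]))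
        exact mul_le_mul_of_nonneg_left (hacocoer i) (sq_nonneg _)
      have h2 : (pr i * (1 - pr i)) * (((n:ℝ)⁻¹ * (pr i)⁻¹)^2 * (2 * lamMax (M i) * Dq i))
          = (2 * (n:ℝ)⁻¹ * Dq i) * (((1 - pr i) / pr i) * lamMax (M i) / (n:ℝ)) := by
        field_simp
      have h3 : (2 * (n:ℝ)⁻¹ * Dq i) * (((1 - pr i) / pr i) * lamMax (M i) / (n:ℝ))
          ≤ (2 * (n:ℝ)⁻¹ * Dq i) * K := by
        refine mul_le_mul_of_nonneg_left (hKle i) ?_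
        have := hDnn i
        positivity
      linarith
    calc ∑ i, (pr i * (1 - pr i)) * ‖u i‖^2
        ≤ ∑ i, (2 * (n:ℝ)⁻¹ * Dq i) * K := Finset.sum_le_sum hper
      _ = (2 * (n:ℝ)⁻¹ * ∑ i, Dq i) * K := by
          rw [← Finset.sum_mul, ← Finset.mul_sum]
      _ = 2 * K * (F x - F xstar) := by
          rw [hsumD]
          field_simp
  calc ∑ C : Finset (Fin n), p C * ‖gC C x - gC C xstar‖ ^ 2
      = ‖∑ i, pr i • u i‖^2 + ∑ i, (pr i * (1 - pr i)) * ‖u i‖^2 := by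
        rw [← key]
        exact Finset.sum_congr rfl fun C _ => by rw [hgCd C]
    _ ≤ 2 * L * (F x - F xstar) + 2 * K * (F x - F xstar) := by
        refine add_le_add ?_ hterm2
        rw [hterm1]
        exact hFco
    _ = 2 * (L + K) * (F x - F xstar) := by ring
end

section
/- Let n ≥ 2, 1 ≤ τ ≤ n, and let S be the τ-nice sampling on {1, …, n}: p_C = 1/C(n,τ) for every subset C of cardinality τ and p_C = 0 otherwise (so p_i = τ/n for all i). Assume each f_i : ℝ^d → ℝ is convex and M_i-smooth, and let x* satisfy ∇f(x*) = 0. Then for all x ∈ ℝ^d, Σ_C p_C ‖∇f_{v(C)}(x) − ∇f_{v(C)}(x*)‖² ≤ 2 ( (n(τ−1))/(τ(n−1)) · L + (n−τ)/(τ(n−1)) · max_i λmax(M_i) ) (f(x) − f(x*)), where L = (1/n) λmax(Σ_{i=1}^n M_i). -/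
open RealInnerProductSpace

open Finset

/-!
Write `a i = ∇f_i x - ∇f_i x*`. Since every marginal of the `τ`-nice sampling is `τ / n`, the
difference of the estimators on a set `C` is `τ⁻¹ ∑_{i ∈ C} a i`. A pair `i ≠ j` lies in
`C(n - 2, τ - 2)` of the `τ`-sets and a single index in `C(n - 1, τ - 1)`, so averaging
`‖∑_{i ∈ C} a i‖²` over the `τ`-sets gives
`τ / (n (n - 1)) * ((n - τ) ∑ ‖a i‖² + (τ - 1) ‖∑ a i‖²)`.
Both terms are controlled by co-coercivity of convex `λ`-smooth functions,
`‖∇g x - ∇g y‖² ≤ 2 λ (g x - g y - ⟪∇g y, x - y⟫)`: applied to each `f_i` with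
`λ = max_i λmax(M_i)` it bounds `∑ ‖a i‖²` by `2 λ n (f x - f x*)`, the linear terms summing to
`⟪n ∇f x*, x - x*⟫ = 0`; applied to `f`, which is `L`-smooth, it bounds
`‖∑ a i‖² = n² ‖∇f x‖²` by `2 L n² (f x - f x*)`.
-/

section Gradient

variable {E : Type*} [NormedAddCommGroup E] [InnerProductSpace ℝ E] [CompleteSpace E]

theorem HasGradientAt.const_mul {g : E → ℝ} {g' x : E} (h : HasGradientAt g g' x) (c : ℝ) :
    HasGradientAt (fun y => c * g y) (c • g') x := by
  rw [hasGradientAt_iff_hasFDerivAt] at *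
  simpa using h.const_mul c

theorem hasGradientAt_sum {ι : Type*} (s : Finset ι) {g : ι → E → ℝ} {x : E}
    (hg : ∀ i ∈ s, DifferentiableAt ℝ (g i) x) :
    HasGradientAt (fun y => ∑ i ∈ s, g i y) (∑ i ∈ s, gradient (g i) x) x := by
  rw [hasGradientAt_iff_hasFDerivAt, map_sum]
  exact HasFDerivAt.fun_sum fun i hi => (hg i hi).hasGradientAt.hasFDerivAt

theorem ConvexOn.add_inner_gradient_le {g : E → ℝ} (hg : ConvexOn ℝ Set.univ g) {y : E}
    (hd : DifferentiableAt ℝ g y) (x : E) : g y + ⟪gradient g y, x - y⟫ ≤ g x := by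
  set ℓ : ℝ →ᵃ[ℝ] E := AffineMap.lineMap y x
  have hline : HasDerivAt (g ∘ ℓ) ⟪gradient g y, x - y⟫ 0 := by
    have hd0 : HasFDerivAt g (InnerProductSpace.toDual ℝ E (gradient g y)) (ℓ 0) := by
      simpa [ℓ] using hd.hasGradientAt.hasFDerivAt
    simpa using hd0.comp_hasDerivAt (0 : ℝ) AffineMap.hasDerivAt_lineMap
  have := (hg.comp_affineMap ℓ).le_slope_of_hasDerivAt
    (Set.mem_univ 0) (Set.mem_univ 1) zero_lt_one hline
  simp only [slope_def_field, Function.comp_apply, ℓ, AffineMap.lineMap_apply_one,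
    AffineMap.lineMap_apply_zero, sub_zero, div_one] at this
  linarith

theorem le_two_mul_mul_of_forall_mul_sub_sq_le {a lam D : ℝ} (hlam : 0 ≤ lam)
    (h : ∀ t : ℝ, t * a - lam / 2 * t ^ 2 * a ≤ D) : a ≤ 2 * lam * D := by
  rcases hlam.eq_or_lt with rfl | hlam
  · by_contra! hpos
    rw [mul_zero, zero_mul] at hpos
    have := h ((D + 1) / a)
    rw [div_mul_cancel₀ _ hpos.ne'] at this
    linarith
  · have := h lam⁻¹
    field_simp at this
    nlinarith

def HasQuadraticUpperBound (g : E → ℝ) (lam : ℝ) : Prop :=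
  ∀ x h, g (x + h) ≤ g x + ⟪gradient g x, h⟫ + lam / 2 * ‖h‖ ^ 2

theorem HasQuadraticUpperBound.mono {g : E → ℝ} {lam lam' : ℝ}
    (hg : HasQuadraticUpperBound g lam) (hle : lam ≤ lam') : HasQuadraticUpperBound g lam' :=
  fun x h => (hg x h).trans <| by gcongr

theorem ConvexOn.norm_gradient_sub_sq_le {g : E → ℝ} (hg : ConvexOn ℝ Set.univ g) {lam : ℝ}
    (hlam : 0 ≤ lam) (hs : HasQuadraticUpperBound g lam) (x : E) {y : E}
    (hd : DifferentiableAt ℝ g y) :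
    ‖gradient g x - gradient g y‖ ^ 2 ≤ 2 * lam * (g x - g y - ⟪gradient g y, x - y⟫) := by
  set G := gradient g x - gradient g y
  -- compare the upper bound at `x` with the tangent bound at `y`, both at the point `x - t • G`
  refine le_two_mul_mul_of_forall_mul_sub_sq_le hlam fun t => ?_
  have hup := hs x (-(t • G))
  have hlow := hg.add_inner_gradient_le hd (x + -(t • G))
  have hG : ⟪gradient g x, t • G⟫ - ⟪gradient g y, t • G⟫ = t * ‖G‖ ^ 2 := by
    rw [← inner_sub_left, real_inner_smul_right, real_inner_self_eq_norm_sq]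
  rw [norm_neg, norm_smul, mul_pow, Real.norm_eq_abs, sq_abs, inner_neg_right] at hup
  rw [add_sub_right_comm, inner_add_right, inner_neg_right] at hlow
  linarith

end Gradient

section QuadForm

variable {d : ℕ}

def quadForm (A : Matrix (Fin d) (Fin d) ℝ) (x : EuclideanSpace ℝ (Fin d)) : ℝ :=
  ∑ j, ∑ k, A j k * x k * x j

theorem quadForm_smul (A : Matrix (Fin d) (Fin d) ℝ) (c : ℝ) (x : EuclideanSpace ℝ (Fin d)) :
    quadForm A (c • x) = c ^ 2 * quadForm A x := by
  simp only [quadForm, PiLp.smul_apply, smul_eq_mul, mul_sum]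
  exact sum_congr rfl fun _ _ => sum_congr rfl fun _ _ => by ring

theorem quadForm_sum {ι : Type*} (s : Finset ι) (A : ι → Matrix (Fin d) (Fin d) ℝ)
    (x : EuclideanSpace ℝ (Fin d)) :
    quadForm (∑ i ∈ s, A i) x = ∑ i ∈ s, quadForm (A i) x := by
  simp only [quadForm, Matrix.sum_apply, sum_mul]
  conv_rhs => rw [sum_comm]
  exact sum_congr rfl fun _ _ => sum_comm

theorem Matrix.PosSemidef.quadForm_nonneg {A : Matrix (Fin d) (Fin d) ℝ} (hA : A.PosSemidef)
    (x : EuclideanSpace ℝ (Fin d)) : 0 ≤ quadForm A x := by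
  have := hA.dotProduct_mulVec_nonneg x.ofLp
  simp only [star_trivial, dotProduct, Matrix.mulVec, mul_sum] at this
  unfold quadForm
  exact this.trans_eq (sum_congr rfl fun _ _ => sum_congr rfl fun _ _ => by ring)

theorem bddAbove_quadForm_sphere (A : Matrix (Fin d) (Fin d) ℝ) :
    BddAbove {r : ℝ | ∃ x : EuclideanSpace ℝ (Fin d), ‖x‖ = 1 ∧ r = quadForm A x} := by
  obtain ⟨C, hC⟩ := (isCompact_sphere (0 : EuclideanSpace ℝ (Fin d)) 1).bddAbove_image
    (f := quadForm A) (by unfold quadForm; fun_prop)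
  exact ⟨C, by rintro _ ⟨x, hx, rfl⟩; exact hC ⟨x, by simpa using hx, rfl⟩⟩

theorem quadForm_le_lamMax_mul_norm_sq (A : Matrix (Fin d) (Fin d) ℝ)
    (x : EuclideanSpace ℝ (Fin d)) : quadForm A x ≤ lamMax A * ‖x‖ ^ 2 := by
  rcases eq_or_ne x 0 with rfl | hx
  · simp [quadForm]
  have hunit : quadForm A (‖x‖⁻¹ • x) ≤ lamMax A :=
    le_csSup (bddAbove_quadForm_sphere A) ⟨_, norm_smul_inv_norm hx, rfl⟩
  rw [quadForm_smul, inv_pow] at hunit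
  have : 0 < ‖x‖ ^ 2 := by positivity
  rwa [inv_mul_le_iff₀ this, mul_comm] at hunit

theorem lamMax_nonneg {A : Matrix (Fin d) (Fin d) ℝ} (hA : A.PosSemidef) : 0 ≤ lamMax A :=
  Real.sSup_nonneg <| by rintro _ ⟨x, -, rfl⟩; exact hA.quadForm_nonneg x

end QuadForm

section NiceSampling

variable {ι : Type*} [Fintype ι] [DecidableEq ι]

theorem card_mul_card_filter_mem_powersetCard (τ : ℕ) (i : ι) :
    Fintype.card ι * #{C ∈ powersetCard τ univ | i ∈ C}
      = τ * (Fintype.card ι).choose τ := by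
  obtain ⟨m, hm⟩ := Nat.exists_eq_add_one.mpr (Fintype.card_pos_iff.mpr ⟨i⟩)
  rcases τ with _ | k
  · simp
  have hcount := card_filter_powersetCard_subset {i} univ (k + 1) (subset_univ _) (by simp)
  simp only [singleton_subset_iff, card_singleton, card_univ, hm] at hcount
  rw [hcount, hm, Nat.add_sub_cancel, Nat.add_sub_cancel, Nat.add_one_mul_choose_eq, mul_comm]

theorem card_mul_card_filter_mem_mem_powersetCard_of_ne (τ : ℕ) {i j : ι} (hij : i ≠ j) :
    Fintype.card ι * (Fintype.card ι - 1) * #{C ∈ powersetCard τ univ | i ∈ C ∧ j ∈ C}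
      = τ * (τ - 1) * (Fintype.card ι).choose τ := by
  obtain ⟨m, hm⟩ : ∃ m, Fintype.card ι = m + 2 :=
    Nat.exists_eq_add_of_le' (Fintype.one_lt_card_iff (α := ι) |>.mpr ⟨i, j, hij⟩)
  obtain hτ | ⟨k, rfl⟩ : τ < 2 ∨ ∃ k, τ = k + 2 :=
    (lt_or_ge τ 2).imp_right Nat.exists_eq_add_of_le'
  · have hempty : {C ∈ powersetCard τ (univ : Finset ι) | i ∈ C ∧ j ∈ C} = ∅ := by
      refine filter_false_of_mem fun C hC ⟨hi, hj⟩ => ?_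
      have := one_lt_card.mpr ⟨i, hi, j, hj, hij⟩
      rw [mem_powersetCard_univ] at hC
      omega
    interval_cases τ <;> simp [hempty]
  have hcount := card_filter_powersetCard_subset {i, j} univ (k + 2) (subset_univ _)
    (by simp [card_pair hij])
  simp only [insert_subset_iff, singleton_subset_iff, card_pair hij, card_univ, hm] at hcount
  rw [hcount, hm, Nat.add_sub_cancel, Nat.add_sub_cancel, show m + 2 - 1 = m + 1 by omega,
    show k + 2 - 1 = k + 1 by omega]
  have h1 := Nat.add_one_mul_choose_eq m k
  have h2 := Nat.add_one_mul_choose_eq (m + 1) (k + 1)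
  calc (m + 2) * (m + 1) * m.choose k = (m + 2) * ((m + 1).choose (k + 1)) * (k + 1) := by
        rw [mul_assoc, h1, mul_assoc]
    _ = (k + 2) * (k + 1) * (m + 2).choose (k + 2) := by rw [h2]; ring

theorem sum_norm_sum_sq_eq_sum_card_mul_inner {E : Type*} [NormedAddCommGroup E]
    [InnerProductSpace ℝ E] (𝒞 : Finset (Finset ι)) (a : ι → E) :
    ∑ C ∈ 𝒞, ‖∑ i ∈ C, a i‖ ^ 2
      = ∑ i, ∑ j, (#{C ∈ 𝒞 | i ∈ C ∧ j ∈ C} : ℝ) * ⟪a i, a j⟫ := by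
  have hexpand (C : Finset ι) : ‖∑ i ∈ C, a i‖ ^ 2
      = ∑ i, ∑ j, if i ∈ C ∧ j ∈ C then ⟪a i, a j⟫ else 0 := by
    rw [← real_inner_self_eq_norm_sq, sum_inner]
    simp_rw [inner_sum]
    simp [ite_and, sum_ite_mem]
  simp_rw [hexpand]
  rw [sum_comm]
  refine sum_congr rfl fun i _ => ?_
  rw [sum_comm]
  refine sum_congr rfl fun j _ => ?_
  rw [← sum_filter, sum_const, nsmul_eq_mul]

theorem card_mul_card_filter_mem_mem_powersetCard (τ : ℕ) (i j : ι) :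
    (Fintype.card ι : ℝ) * (Fintype.card ι - 1) * #{C ∈ powersetCard τ univ | i ∈ C ∧ j ∈ C}
      = (Fintype.card ι).choose τ * τ * (τ - 1)
        + if i = j then ((Fintype.card ι).choose τ : ℝ) * τ * (Fintype.card ι - τ)
          else 0 := by
  by_cases hij : i = j
  · subst hij
    have h : (Fintype.card ι : ℝ) * #{C ∈ powersetCard τ univ | i ∈ C}
        = τ * (Fintype.card ι).choose τ := by
      exact_mod_cast card_mul_card_filter_mem_powersetCard τ i
    simp only [and_self, if_true]
    linear_combination ((Fintype.card ι : ℝ) - 1) * h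
  · have h := card_mul_card_filter_mem_mem_powersetCard_of_ne τ hij
    have hn : 1 ≤ Fintype.card ι := Fintype.card_pos_iff.mpr ⟨i⟩
    rw [if_neg hij, add_zero]
    rcases τ with _ | τ
    · simp
    · rw [Nat.add_sub_cancel] at h
      have := congrArg (Nat.cast : ℕ → ℝ) h
      push_cast [Nat.cast_sub hn] at this ⊢
      linear_combination this

theorem card_mul_sum_powersetCard_norm_sum_sq {E : Type*} [NormedAddCommGroup E]
    [InnerProductSpace ℝ E] (τ : ℕ) (a : ι → E) :
    (Fintype.card ι : ℝ) * (Fintype.card ι - 1)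
        * ∑ C ∈ powersetCard τ univ, ‖∑ i ∈ C, a i‖ ^ 2
      = (Fintype.card ι).choose τ * (τ * (Fintype.card ι - τ) * ∑ i, ‖a i‖ ^ 2
          + τ * (τ - 1) * ‖∑ i, a i‖ ^ 2) := by
  have hsq : ‖∑ i, a i‖ ^ 2 = ∑ i, ∑ j, ⟪a i, a j⟫ := by
    rw [← real_inner_self_eq_norm_sq, sum_inner]
    simp_rw [inner_sum]
  simp_rw [sum_norm_sum_sq_eq_sum_card_mul_inner, mul_sum, ← mul_assoc,
    card_mul_card_filter_mem_mem_powersetCard, add_mul, sum_add_distrib, ite_mul, zero_mul,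
    sum_ite_eq, if_pos (mem_univ _), real_inner_self_eq_norm_sq, hsq, mul_sum]
  simp only [mul_add, mul_sum, mul_assoc]
  ring

variable (ι) in
noncomputable def niceSampling (τ : ℕ) (C : Finset ι) : ℝ :=
  if #C = τ then 1 / ((Fintype.card ι).choose τ : ℝ) else 0

theorem sum_filter_mem_niceSampling {τ : ℕ} (hτ : τ ≤ Fintype.card ι) (i : ι) :
    ∑ C ∈ univ.filter (fun C : Finset ι => i ∈ C), niceSampling ι τ C
      = τ / Fintype.card ι := by
  have hcount : (Fintype.card ι : ℝ) * #{C ∈ powersetCard τ univ | i ∈ C}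
      = τ * (Fintype.card ι).choose τ := by
    exact_mod_cast card_mul_card_filter_mem_powersetCard τ i
  have hfilter : {C ∈ (univ : Finset (Finset ι)) | i ∈ C ∧ #C = τ}
      = {C ∈ powersetCard τ (univ : Finset ι) | i ∈ C} := by
    ext C
    simp [and_comm]
  have hn : (Fintype.card ι : ℝ) ≠ 0 := by
    exact_mod_cast (Fintype.card_pos_iff.mpr ⟨i⟩).ne'
  have hchoose : ((Fintype.card ι).choose τ : ℝ) ≠ 0 := by
    exact_mod_cast (Nat.choose_pos hτ).ne'
  simp only [niceSampling]
  rw [← sum_filter, filter_filter, hfilter, sum_const, nsmul_eq_mul]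
  field_simp
  linear_combination hcount

theorem sum_niceSampling_mul_norm_sq_le {E : Type*} [NormedAddCommGroup E]
    [InnerProductSpace ℝ E] {τ : ℕ} (hn : 2 ≤ Fintype.card ι) (hτ1 : 1 ≤ τ)
    (hτn : τ ≤ Fintype.card ι) (a : ι → E) {lam L D : ℝ}
    (h1 : ∑ i, ‖a i‖ ^ 2 ≤ 2 * lam * (Fintype.card ι * D))
    (h2 : ‖∑ i, a i‖ ^ 2 ≤ 2 * L * (Fintype.card ι ^ 2 * D)) :
    ∑ C, niceSampling ι τ C * ‖(τ : ℝ)⁻¹ • ∑ i ∈ C, a i‖ ^ 2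
      ≤ 2 * ((Fintype.card ι * (τ - 1)) / (τ * (Fintype.card ι - 1)) * L
          + (Fintype.card ι - τ) / (τ * (Fintype.card ι - 1)) * lam) * D := by
  have hid := card_mul_sum_powersetCard_norm_sum_sq τ a
  set n : ℝ := (Fintype.card ι : ℝ)
  have hn1 : 1 < n := by simp only [n]; exact_mod_cast hn
  have hτ : (1 : ℝ) ≤ τ := by exact_mod_cast hτ1
  have hτn' : (τ : ℝ) ≤ n := by simp only [n]; exact_mod_cast hτn
  have hchoose : 0 < ((Fintype.card ι).choose τ : ℝ) := by exact_mod_cast Nat.choose_pos hτn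
  have hsum : ∑ C, niceSampling ι τ C * ‖(τ : ℝ)⁻¹ • ∑ i ∈ C, a i‖ ^ 2
      = (τ * (n - τ) * ∑ i, ‖a i‖ ^ 2 + τ * (τ - 1) * ‖∑ i, a i‖ ^ 2)
          / (τ ^ 2 * (n * (n - 1))) := by
    simp only [niceSampling, ite_mul, zero_mul, norm_smul, mul_pow, norm_inv, Real.norm_natCast]
    rw [← sum_filter, univ_filter_card_eq, ← mul_sum, ← mul_sum]
    have : n - 1 ≠ 0 := (sub_pos.2 hn1).ne'
    field_simp
    linear_combination hid
  have hcoef1 : 0 ≤ (τ : ℝ) * (n - τ) := by nlinarith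
  have hcoef2 : 0 ≤ (τ : ℝ) * (τ - 1) := by nlinarith
  calc _ = _ := hsum
    _ ≤ (τ * (n - τ) * (2 * lam * (n * D)) + τ * (τ - 1) * (2 * L * (n ^ 2 * D)))
          / (τ ^ 2 * (n * (n - 1))) := by
      gcongr ?_ / _
      exact add_le_add (mul_le_mul_of_nonneg_left h1 hcoef1) (mul_le_mul_of_nonneg_left h2 hcoef2)
    _ = _ := by
      field_simp
      ring

end NiceSampling

theorem convexOn_of_eq_mul_sum {E ι : Type*} [AddCommGroup E] [Module ℝ E] [Fintype ι]
    {f : ι → E → ℝ} {F : E → ℝ} {c : ℝ} (hF : ∀ x, F x = c * ∑ i, f i x) (hc : 0 ≤ c)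
    (hf : ∀ i, ConvexOn ℝ Set.univ (f i)) : ConvexOn ℝ Set.univ F := by
  have hsum : ConvexOn ℝ Set.univ (∑ i, f i) :=
    sum_induction _ (ConvexOn ℝ Set.univ) (fun _ _ => ConvexOn.add)
      (convexOn_const 0 convex_univ) fun i _ => hf i
  rw [show F = fun x => c • (∑ i, f i) x from funext fun x => by simp [hF, Finset.sum_apply]]
  exact hsum.smul hc

section FiniteSum

variable {E : Type*} [NormedAddCommGroup E] [InnerProductSpace ℝ E] [CompleteSpace E]
  {ι : Type*} [Fintype ι] {f : ι → E → ℝ}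

theorem sum_norm_gradient_sub_sq_le {lam : ℝ} (hlam : 0 ≤ lam)
    (hf : ∀ i, ConvexOn ℝ Set.univ (f i)) (hs : ∀ i, HasQuadraticUpperBound (f i) lam) {y : E}
    (hd : ∀ i, DifferentiableAt ℝ (f i) y) (hy : ∑ i, gradient (f i) y = 0) (x : E) :
    ∑ i, ‖gradient (f i) x - gradient (f i) y‖ ^ 2 ≤ 2 * lam * ∑ i, (f i x - f i y) :=
  calc ∑ i, ‖gradient (f i) x - gradient (f i) y‖ ^ 2
      ≤ ∑ i, 2 * lam * (f i x - f i y - ⟪gradient (f i) y, x - y⟫) :=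
        sum_le_sum fun i _ => (hf i).norm_gradient_sub_sq_le hlam (hs i) x (hd i)
    _ = 2 * lam * ∑ i, (f i x - f i y) := by
        rw [← mul_sum, sum_sub_distrib, ← sum_inner, hy, inner_zero_left, sub_zero]

variable {F : E → ℝ} {c : ℝ}

theorem hasGradientAt_of_eq_mul_sum (hF : ∀ x, F x = c * ∑ i, f i x) {x : E}
    (hf : ∀ i, DifferentiableAt ℝ (f i) x) :
    HasGradientAt F (c • ∑ i, gradient (f i) x) x := by
  rw [show F = fun y => c * ∑ i, f i y from funext hF]
  exact (hasGradientAt_sum univ fun i _ => hf i).const_mul c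

theorem norm_sum_gradient_sub_sq_le (hF : ∀ x, F x = c * ∑ i, f i x) (hc : 0 < c)
    (hf : ∀ i, Differentiable ℝ (f i)) (hconv : ∀ i, ConvexOn ℝ Set.univ (f i)) {L : ℝ}
    (hL : 0 ≤ L) (hs : HasQuadraticUpperBound F L) {y : E} (hy : ∑ i, gradient (f i) y = 0)
    (x : E) :
    ‖∑ i, (gradient (f i) x - gradient (f i) y)‖ ^ 2 ≤ 2 * L * (c⁻¹ ^ 2 * (F x - F y)) := by
  have hgrad (z : E) := hasGradientAt_of_eq_mul_sum hF fun i => hf i z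
  have hcoco := (convexOn_of_eq_mul_sum hF hc.le hconv).norm_gradient_sub_sq_le hL hs x
    (hgrad y).differentiableAt
  rw [(hgrad x).gradient, (hgrad y).gradient, hy, smul_zero, sub_zero, inner_zero_left, sub_zero,
    norm_smul, Real.norm_of_nonneg hc.le] at hcoco
  rw [sum_sub_distrib, hy, sub_zero]
  calc ‖∑ i, gradient (f i) x‖ ^ 2 = c⁻¹ ^ 2 * (c * ‖∑ i, gradient (f i) x‖) ^ 2 := by
        field_simp
    _ ≤ c⁻¹ ^ 2 * (2 * L * (F x - F y)) := by gcongr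
    _ = 2 * L * (c⁻¹ ^ 2 * (F x - F y)) := by ring

end FiniteSum

section Smoothness

variable {d : ℕ}

theorem hasQuadraticUpperBound_lamMax {g : EuclideanSpace ℝ (Fin d) → ℝ}
    {A : Matrix (Fin d) (Fin d) ℝ}
    (hg : ∀ x h, g (x + h) ≤ g x + ⟪gradient g x, h⟫ + 1 / 2 * quadForm A h) :
    HasQuadraticUpperBound g (lamMax A) := fun x h => by
  linarith [hg x h, quadForm_le_lamMax_mul_norm_sq A h]

theorem hasQuadraticUpperBound_iSup_lamMax {ι : Type*} [Finite ι]
    {f : ι → EuclideanSpace ℝ (Fin d) → ℝ} {M : ι → Matrix (Fin d) (Fin d) ℝ}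
    (hs : ∀ i x h, f i (x + h) ≤ f i x + ⟪gradient (f i) x, h⟫ + 1 / 2 * quadForm (M i) h)
    (i : ι) : HasQuadraticUpperBound (f i) (⨆ j, lamMax (M j)) :=
  (hasQuadraticUpperBound_lamMax (hs i)).mono
    (le_ciSup (f := fun j => lamMax (M j)) (Set.finite_range _).bddAbove i)

theorem hasQuadraticUpperBound_of_eq_mul_sum {ι : Type*} [Fintype ι]
    {f : ι → EuclideanSpace ℝ (Fin d) → ℝ} {F : EuclideanSpace ℝ (Fin d) → ℝ} {c : ℝ}
    (hF : ∀ x, F x = c * ∑ i, f i x) (hc : 0 ≤ c) (hf : ∀ i, Differentiable ℝ (f i))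
    {M : ι → Matrix (Fin d) (Fin d) ℝ}
    (hs : ∀ i x h, f i (x + h) ≤ f i x + ⟪gradient (f i) x, h⟫ + 1 / 2 * quadForm (M i) h) :
    HasQuadraticUpperBound F (c * lamMax (∑ i, M i)) := fun x h => by
  have hsum := sum_le_sum fun i (_ : i ∈ univ) => hs i x h
  have hq := quadForm_le_lamMax_mul_norm_sq (∑ i, M i) h
  rw [quadForm_sum] at hq
  simp only [sum_add_distrib, ← mul_sum] at hsum
  rw [hF, hF, (hasGradientAt_of_eq_mul_sum hF fun i => hf i x).gradient, real_inner_smul_left,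
    sum_inner]
  calc c * ∑ i, f i (x + h)
      ≤ c * (∑ i, f i x + ∑ i, ⟪gradient (f i) x, h⟫ + lamMax (∑ i, M i) / 2 * ‖h‖ ^ 2) := by
        gcongr
        linarith
    _ = _ := by ring

end Smoothness

/-- **Proposition 2(iv) (`τ`-nice sampling).** Let `n ≥ 2`, `1 ≤ τ ≤ n`, and let `S` be the
`τ`-nice sampling: `p_C = 1/C(n,τ)` for `|C| = τ` and `p_C = 0` otherwise. If each `f_i` is
convex and `M_i`-smooth and `∇f(x*) = 0`, then for all `x`,
`Σ_C p_C ‖∇f_{v(C)}(x) − ∇f_{v(C)}(x*)‖²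
  ≤ 2 ((n(τ−1))/(τ(n−1)) L + (n−τ)/(τ(n−1)) max_i λmax(M_i)) (f(x) − f(x*))`,
where `L = (1/n) λmax(Σ_i M_i)`. -/
theorem expected_smoothness_tau_nice_sampling
    {d n : ℕ} (hn : 2 ≤ n)
    (τ : ℕ) (hτ1 : 1 ≤ τ) (hτn : τ ≤ n)
    (p : Finset (Fin n) → ℝ)
    (hp : ∀ C : Finset (Fin n),
      p C = if C.card = τ then 1 / (n.choose τ : ℝ) else 0)
    (q : Fin n → ℝ)
    (hq : ∀ i, q i = ∑ C ∈ Finset.univ.filter (fun C : Finset (Fin n) => i ∈ C), p C)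
    (f : Fin n → EuclideanSpace ℝ (Fin d) → ℝ)
    (hdiff : ∀ i, Differentiable ℝ (f i))
    (hconv : ∀ i, ConvexOn ℝ Set.univ (f i))
    (M : Fin n → Matrix (Fin d) (Fin d) ℝ)
    (hMpd : ∀ i, (M i).PosDef)
    (hsmooth : ∀ i (x h : EuclideanSpace ℝ (Fin d)),
      f i (x + h) ≤ f i x + ⟪gradient (f i) x, h⟫ + (1 / 2) * ∑ j, ∑ k, M i j k * h k * h j)
    (F : EuclideanSpace ℝ (Fin d) → ℝ)
    (hF : ∀ x, F x = (1 / (n : ℝ)) * ∑ i, f i x)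
    (xstar : EuclideanSpace ℝ (Fin d))
    (hcrit : gradient F xstar = 0)
    (gC : Finset (Fin n) → EuclideanSpace ℝ (Fin d) → EuclideanSpace ℝ (Fin d))
    (hgC : ∀ C x, gC C x = ((n : ℝ)⁻¹) • ∑ i ∈ C, (q i)⁻¹ • gradient (f i) x)
    (L : ℝ) (hL : L = (1 / (n : ℝ)) * lamMax (∑ i, M i)) :
    ∀ x, ∑ C : Finset (Fin n), p C * ‖gC C x - gC C xstar‖ ^ 2
        ≤ 2 * (((n : ℝ) * ((τ : ℝ) - 1)) / ((τ : ℝ) * ((n : ℝ) - 1)) * L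
              + ((n : ℝ) - (τ : ℝ)) / ((τ : ℝ) * ((n : ℝ) - 1))
                  * ⨆ i : Fin n, lamMax (M i))
            * (F x - F xstar) := by
  intro x
  have hn0 : (n : ℝ) ≠ 0 := by exact_mod_cast (by omega : n ≠ 0)
  have hgrad (z) := hasGradientAt_of_eq_mul_sum hF fun i => (hdiff i).differentiableAt (x := z)
  have hcrit' : ∑ i, gradient (f i) xstar = 0 := by
    simpa [(hgrad xstar).gradient, hn0] using hcrit
  have hp' : p = niceSampling (Fin n) τ :=
    funext fun C => by rw [hp, niceSampling, Fintype.card_fin]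
  have hq' (i : Fin n) : q i = τ / n := by
    simpa [hq, hp'] using sum_filter_mem_niceSampling (by simpa using hτn) i
  have hgC' (C : Finset (Fin n)) : gC C x - gC C xstar
      = (τ : ℝ)⁻¹ • ∑ i ∈ C, (gradient (f i) x - gradient (f i) xstar) := by
    rw [hgC, hgC, ← smul_sub, ← sum_sub_distrib, smul_sum, smul_sum]
    refine sum_congr rfl fun i _ => ?_
    rw [← smul_sub, smul_smul, hq', inv_div, inv_mul_eq_div, div_div_cancel_left' hn0]
  have hlam : 0 ≤ ⨆ i, lamMax (M i) :=
    Real.iSup_nonneg fun i => lamMax_nonneg (hMpd i).posSemidef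
  have hL0 : 0 ≤ L := hL ▸ mul_nonneg (by positivity)
    (lamMax_nonneg (Matrix.posSemidef_sum _ fun i _ => (hMpd i).posSemidef))
  have hS1 := sum_norm_gradient_sub_sq_le hlam hconv (hasQuadraticUpperBound_iSup_lamMax hsmooth)
    (fun i => (hdiff i).differentiableAt) hcrit' x
  have hS2 := norm_sum_gradient_sub_sq_le hF (by positivity) hdiff hconv hL0
    (hL ▸ hasQuadraticUpperBound_of_eq_mul_sum hF (by positivity) hdiff hsmooth) hcrit' x
  have hsumf : ∑ i, (f i x - f i xstar) = n * (F x - F xstar) := by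
    rw [sum_sub_distrib, hF, hF]
    field_simp
  have key := sum_niceSampling_mul_norm_sq_le (by simpa) hτ1 (by simpa)
    (fun i => gradient (f i) x - gradient (f i) xstar)
    (by rw [Fintype.card_fin, ← hsumf]; exact hS1) (by rw [Fintype.card_fin]; simpa using hS2)
  rw [Fintype.card_fin] at key
  simp_rw [hp', hgC']
  exact key
end
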